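/- arXiv:1304.8046 — 3 statements merged into one kernel-verified Lean document; each statement's English description precedes it below -/
import Mathlib

section
/- There is a constant e such that for every integer c ≥ 0 and every binary string x with |x| ≥ e, sophistication at significance c + e·⌊log₂|x|⌋ is bounded by the Busy Beaver logical depth at significance c up to a logarithmic term: soph_{c + e·⌊log₂|x|⌋}(x) ≤ ld^bb_c(x) + e·⌊log₂|x|⌋. -/
/-- Bijective binary encoding of binary strings as natural numbers. -/
def strToNat : List Bool → ℕ
  | [] => 0
  | b :: t => (if b then 2 else 1) + 2 * strToNat t

/-- The partial result of running machine `M` on program `p` and auxiliary input `d`. -/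
def evalS (M : Nat.Partrec.Code) (p d : List Bool) : Part ℕ :=
  M.eval (Nat.pair (strToNat p) (strToNat d))

/-- `M(p, d) = x`. -/
def outputs (M : Nat.Partrec.Code) (p d x : List Bool) : Prop :=
  strToNat x ∈ evalS M p d

/-- `M` halts on program `p` (with empty auxiliary input). -/
def haltsOn (M : Nat.Partrec.Code) (p : List Bool) : Prop :=
  (evalS M p []).Dom

/-- The number of computation steps taken by `M` on program `p` (with empty auxiliary
input); meaningful only when `M` halts on `p`. -/
noncomputable def halttime (M : Nat.Partrec.Code) (p : List Bool) : ℕ :=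
  sInf {t | (Nat.Partrec.Code.evaln t M (Nat.pair (strToNat p) 0)).isSome}

/-- `M` is a universal machine: it simulates every machine `V` via a prefix `w_V`. -/
def Universal (M : Nat.Partrec.Code) : Prop :=
  ∀ V : Nat.Partrec.Code, ∃ w : List Bool, ∀ p y : List Bool,
    (evalS V p y).Dom → evalS M (w ++ p) y = evalS V p y

/-- Plain Kolmogorov complexity `C(x)` on machine `M`. -/
noncomputable def Cpx (M : Nat.Partrec.Code) (x : List Bool) : ℕ :=
  sInf {n | ∃ p : List Bool, p.length = n ∧ outputs M p [] x}

/-- Sophistication of `x` at (integer) significance level `c`. -/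
noncomputable def soph (M : Nat.Partrec.Code) (c : ℤ) (x : List Bool) : ℕ :=
  sInf {n | ∃ p : List Bool, p.length = n ∧ (∀ d : List Bool, (evalS M p d).Dom) ∧
    ∃ d : List Bool, outputs M p d x ∧ (p.length + d.length : ℤ) ≤ (Cpx M x : ℤ) + c}

/-- Logical depth of `x` at significance level `c`. -/
noncomputable def ld (M : Nat.Partrec.Code) (c : ℕ) (x : List Bool) : ℕ :=
  sInf {t | ∃ p : List Bool, p.length ≤ Cpx M x + c ∧ outputs M p [] x ∧ halttime M p = t}

/-- The inverse Busy Beaver function `bb(n)`. -/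
noncomputable def bbInv (M : Nat.Partrec.Code) (n : ℕ) : ℕ :=
  sInf {k | ∃ p : List Bool, p.length = k ∧ haltsOn M p ∧ n ≤ halttime M p}

/-- Busy Beaver logical depth of `x` at significance `c`. -/
noncomputable def ldbb (M : Nat.Partrec.Code) (c : ℕ) (x : List Bool) : ℕ :=
  bbInv M (ld M c x)

/-- The Busy Beaver function `BB(l)`. -/
noncomputable def BB (M : Nat.Partrec.Code) (l : ℕ) : ℕ :=
  sSup {t | ∃ p : List Bool, p.length ≤ l ∧ haltsOn M p ∧ halttime M p = t}

/-- Canonical encoding of a finite set of binary strings: the code of the sorted list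
of the codes of its elements. -/
def setCode (S : Finset (List Bool)) : ℕ :=
  Encodable.encode ((S.image strToNat).sort (· ≤ ·))

/-- Kolmogorov complexity `C(S)` of a finite set of binary strings on machine `M`. -/
noncomputable def CSet (M : Nat.Partrec.Code) (S : Finset (List Bool)) : ℕ :=
  sInf {n | ∃ p : List Bool, p.length = n ∧ setCode S ∈ evalS M p []}

/-- Conditional Kolmogorov complexity `C(x | m)` where the condition is a natural number. -/
noncomputable def CpxCondN (M : Nat.Partrec.Code) (x : List Bool) (m : ℕ) : ℕ :=
  sInf {n | ∃ p : List Bool, p.length = n ∧ strToNat x ∈ M.eval (Nat.pair (strToNat p) m)}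


/-!
Let `t = ld_c(x)` be attained by a program `p` with `|p| ≤ k := C(x) + c`, let `q` be a shortest
program that halts after `T ≥ t` steps, so that `|q| = ldbb_c(x)`, and let `2 ^ j` be the largest
power of two not exceeding the number of programs of length `≤ k` whose halting time lies in
`[t, T]`.

* Given `q`, a machine can compute `T`, which makes it total. From the data `(k, r)` it outputs the
  result of the program of length `≤ k` that has rank `r` when those halting within `T` steps are
  ordered by decreasing halting time. The rank of `p` is below `2 ^ (j + 1)`, so
  `soph(x) ≤ |q| + O(1)` with data of length `j + O(log k)`.
* Given `k`, `j` and `a = ⌊H / 2 ^ j⌋ + 1`, where `H` is the number of programs of length `≤ k`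
  halting before step `t`, a machine can wait until `a * 2 ^ j` of them have halted, which happens
  at a step `τ ∈ [t, T]`, and then output a number too large for `U` to produce in fewer than `τ`
  steps. Since `a < 2 ^ (k + 1 - j)`, this shows `|q| = bb(t) ≤ k - j + O(log k)`.

Adding up, the program and data have length `k + O(log k)`. When `c < |x|`, `log k` is
`log |x| + O(1)`; otherwise the program that outputs its data, run on `x`, already suffices.
-/

open Finset Nat.Partrec Nat.Partrec.Code

section Strings

@[simp] theorem strToNat_nil : strToNat [] = 0 := rfl

theorem two_pow_length_le (l : List Bool) : 2 ^ l.length ≤ strToNat l + 1 := by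
  induction l with
  | nil => simp [strToNat]
  | cons b t ih => cases b <;> simp [strToNat, pow_succ] <;> omega

theorem strToNat_add_two_le (l : List Bool) : strToNat l + 2 ≤ 2 ^ (l.length + 1) := by
  induction l with
  | nil => simp [strToNat]
  | cons b t ih => cases b <;> simp [strToNat, pow_succ] <;> omega

theorem length_eq_log (l : List Bool) : l.length = Nat.log 2 (strToNat l + 1) :=
  (Nat.log_eq_of_pow_le_of_lt_pow (two_pow_length_le l) (by grind [strToNat_add_two_le])).symm

theorem strToNat_lt_of_length_le {l : List Bool} {k : ℕ} (h : l.length ≤ k) :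
    strToNat l < 2 ^ (k + 1) - 1 := by
  have := Nat.pow_le_pow_right two_pos (Nat.succ_le_succ h)
  grind [strToNat_add_two_le]

theorem strToNat_surjective : Function.Surjective strToNat := by
  intro z
  induction z using Nat.strong_induction_on with
  | _ z ih =>
    rcases Nat.even_or_odd' z with ⟨w, rfl | rfl⟩
    · rcases w with _ | w
      · exact ⟨[], rfl⟩
      · obtain ⟨l, rfl⟩ := ih w (by omega)
        exact ⟨true :: l, by simp [strToNat]; ring⟩
    · obtain ⟨l, rfl⟩ := ih w (by omega)
      exact ⟨false :: l, by simp [strToNat]; ring⟩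

end Strings

section Logarithms

theorem exists_mul_two_pow_mem_Ioc {h₀ h₁ : ℕ} (h : h₀ < h₁) :
    ∃ a, 0 < a ∧ h₀ < a * 2 ^ Nat.log 2 (h₁ - h₀) ∧
      a * 2 ^ Nat.log 2 (h₁ - h₀) ≤ h₁ := by
  set j := Nat.log 2 (h₁ - h₀)
  have hj : 2 ^ j ≤ h₁ - h₀ := Nat.pow_log_le_self 2 (Nat.sub_ne_zero_of_lt h)
  have := Nat.div_mul_le_self h₀ (2 ^ j)
  refine ⟨h₀ / 2 ^ j + 1, Nat.succ_pos _, ?_, ?_⟩ <;> rw [add_mul, one_mul]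
  · exact Nat.lt_div_mul_add (Nat.two_pow_pos _)
  · omega

theorem log_add_one_add_le {a j m : ℕ} (ha : 0 < a) (h : a * 2 ^ j < 2 ^ m) :
    Nat.log 2 (a + 1) + j ≤ m := by
  have hjm : j ≤ m :=
    (Nat.pow_le_pow_iff_right one_lt_two).1 ((Nat.le_mul_of_pos_left _ ha).trans h.le)
  have ha : a < 2 ^ (m - j) := by
    rwa [← Nat.mul_lt_mul_right (Nat.two_pow_pos j), ← pow_add, Nat.sub_add_cancel hjm]
  have : Nat.log 2 (a + 1) ≤ Nat.log 2 (2 ^ (m - j)) := Nat.log_mono_right ha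
  rw [Nat.log_pow one_lt_two] at this
  omega

theorem log_le_log_add_of_le_mul_two_pow {m n B : ℕ} (h : m ≤ n * 2 ^ B) :
    Nat.log 2 m ≤ Nat.log 2 n + B := by
  rcases eq_or_ne m 0 with rfl | hm
  · simp
  have hn := Nat.lt_pow_succ_log_self one_lt_two n
  have : m < 2 ^ (Nat.log 2 n + 1 + B) := by
    rw [pow_add]
    exact h.trans_lt (Nat.mul_lt_mul_of_pos_right hn (Nat.two_pow_pos B))
  have := Nat.log_lt_of_lt_pow hm this
  omega

end Logarithms

section PrimrecLemmas

theorem Primrec.nat_pow : Primrec₂ ((· ^ ·) : ℕ → ℕ → ℕ) :=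
  Primrec₂.unpaired'.1 Nat.Primrec.pow

variable {α : Type*} [Primcodable α]

theorem Primrec.finset_sum_range {f : α → ℕ → ℕ} {g : α → ℕ} (hf : Primrec₂ f)
    (hg : Primrec g) : Primrec fun a => ∑ i ∈ range (g a), f a i := by
  refine (Primrec.nat_rec' hg (Primrec.const 0) (Primrec.nat_add.comp (Primrec.snd.comp Primrec.snd)
    (hf.comp Primrec.fst (Primrec.fst.comp Primrec.snd))).to₂).of_eq fun a => ?_
  induction g a with
  | zero => rfl
  | succ n ih => simp [sum_range_succ, ih]

theorem Primrec.card_filter_range {p : α → ℕ → Prop} [∀ a, DecidablePred (p a)]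
    {g : α → ℕ} (hp : PrimrecRel p) (hg : Primrec g) :
    Primrec fun a => #{i ∈ range (g a) | p a i} :=
  (Primrec.finset_sum_range (Primrec.ite hp (Primrec.const 1) (Primrec.const 0)).to₂ hg).of_eq
    fun _ => (card_filter _ _).symm

end PrimrecLemmas

section PairEncoding

/-- The bits of `encodePair k y`, from the least significant one: `s` zeros, a one, the `s` bits
of `k` and then those of `y`, where `s = log₂ k + 1`. The trailing zeros make `k` self-delimiting
at a cost of `2 log₂ k + O(1)` bits, while `y` is stored without overhead. -/
def encodePair (k y : ℕ) : ℕ :=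
  let s := Nat.log 2 k + 1
  2 ^ s * (2 * (y * 2 ^ s + k) + 1)

def decodePair (z : ℕ) : ℕ × ℕ :=
  let s := padicValNat 2 z
  (z / 2 ^ s / 2 % 2 ^ s, z / 2 ^ s / 2 / 2 ^ s)

theorem decodePair_encodePair (k y : ℕ) : decodePair (encodePair k y) = (k, y) := by
  set s := Nat.log 2 k + 1
  have hk : k < 2 ^ s := Nat.lt_pow_succ_log_self one_lt_two k
  have he : encodePair k y = 2 ^ s * (2 * (y * 2 ^ s + k) + 1) := rfl
  have hs : padicValNat 2 (encodePair k y) = s := by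
    rw [he, padicValNat.mul (by positivity) (by omega), padicValNat.prime_pow,
      padicValNat.eq_zero_of_not_dvd (by omega), add_zero]
  have hw : encodePair k y / 2 ^ s / 2 = y * 2 ^ s + k := by
    rw [he, Nat.mul_div_cancel_left _ (by positivity)]
    omega
  simp only [decodePair, hs, hw, add_comm _ k, Nat.add_mul_mod_self_right, Nat.mod_eq_of_lt hk,
    Nat.add_mul_div_right _ _ (Nat.two_pow_pos s), Nat.div_eq_of_lt hk, zero_add]

theorem log_encodePair_le (k y : ℕ) :
    Nat.log 2 (encodePair k y + 1) ≤ 2 * Nat.log 2 k + 3 + Nat.log 2 (y + 1) := by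
  set s := Nat.log 2 k + 1
  have hk : k < 2 ^ s := Nat.lt_pow_succ_log_self one_lt_two k
  have hy : y + 1 < 2 ^ (Nat.log 2 (y + 1) + 1) := Nat.lt_pow_succ_log_self one_lt_two _
  have hs : 1 ≤ 2 ^ s := Nat.one_le_two_pow
  have hle : encodePair k y + 1 ≤ 2 ^ (2 * s + 1) * (y + 1) := by
    rw [show encodePair k y = 2 ^ s * (2 * (y * 2 ^ s + k) + 1) from rfl, pow_succ 2 (2 * s),
      pow_mul', sq]
    nlinarith
  have hlt : encodePair k y + 1 < 2 ^ (2 * s + 1 + (Nat.log 2 (y + 1) + 1)) := by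
    rw [pow_add]
    exact hle.trans_lt (Nat.mul_lt_mul_of_pos_left hy (by positivity))
  have := Nat.log_lt_of_lt_pow (by omega) hlt
  omega

theorem padicValNat_two_eq_findGreatest (z : ℕ) :
    padicValNat 2 z = Nat.findGreatest (fun i => 2 ^ i ∣ z) z := by
  rcases eq_or_ne z 0 with rfl | hz
  · simp
  symm
  refine Nat.findGreatest_eq_iff.2 ⟨?_, fun _ => pow_padicValNat_dvd, fun i hi _ hdvd => ?_⟩
  · exact (padicValNat_le_nat_log z).trans (Nat.log_le_self 2 z)
  · exact absurd ((padicValNat_dvd_iff_le hz).1 hdvd) (by omega)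

theorem primrec_decodePair : Primrec decodePair := by
  have hv : Primrec (padicValNat 2) := by
    have hdvd : PrimrecRel fun z i : ℕ => 2 ^ i ∣ z :=
      (Primrec.eq.comp (Primrec.nat_mod.comp Primrec.fst
        (Primrec.nat_pow.comp (Primrec.const 2) Primrec.snd)) (Primrec.const 0)).of_eq
        fun _ => Nat.dvd_iff_mod_eq_zero.symm
    exact (Primrec.nat_findGreatest Primrec.id hdvd).of_eq fun z =>
      (padicValNat_two_eq_findGreatest z).symm
  have hp : Primrec fun z => 2 ^ padicValNat 2 z := Primrec.nat_pow.comp (Primrec.const 2) hv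
  have hw : Primrec fun z => z / 2 ^ padicValNat 2 z / 2 :=
    Primrec.nat_div.comp (Primrec.nat_div.comp Primrec.id hp) (Primrec.const 2)
  exact (Primrec.nat_mod.comp hw hp).pair (Primrec.nat_div.comp hw hp)

end PairEncoding

namespace Nat.Partrec.Code

theorem exists_evaln_lt_pow (c : Code) :
    ∃ D, ∀ k n x, x ∈ evaln k c n → x < (k + 1) ^ D := by
  have mono : ∀ {k D D'}, D ≤ D' → (k + 1) ^ D ≤ (k + 1) ^ D' :=
    fun h => Nat.pow_le_pow_right (Nat.succ_pos _) h
  induction c with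
  | zero | succ | left | right =>
    refine ⟨1, fun k n x h => ?_⟩
    rcases k with _ | k
    · simp [evaln] at h
    · simp [evaln, Option.bind_eq_some_iff] at h
      obtain ⟨hn, rfl⟩ := h
      have := Nat.unpair_left_le n
      have := Nat.unpair_right_le n
      rw [pow_one]
      omega
  | pair cf cg ihf ihg =>
    obtain ⟨Df, hf⟩ := ihf
    obtain ⟨Dg, hg⟩ := ihg
    refine ⟨2 * (Df + Dg), fun k n x h => ?_⟩
    rcases k with _ | k
    · simp [evaln] at h
    simp [evaln, Option.bind_eq_some_iff, Seq.seq] at h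
    obtain ⟨-, y, hy, z, hz, rfl⟩ := h
    have hy := (hf _ _ _ hy).trans_le (mono (Nat.le_add_right Df Dg))
    have hz := (hg _ _ _ hz).trans_le (mono (Nat.le_add_left Dg Df))
    calc Nat.pair y z < (max y z + 1) ^ 2 := Nat.pair_lt_max_add_one_sq y z
      _ ≤ ((k + 1 + 1) ^ (Df + Dg)) ^ 2 := Nat.pow_le_pow_left (by omega) 2
      _ = (k + 1 + 1) ^ (2 * (Df + Dg)) := by ring
  | comp cf cg ihf _ =>
    obtain ⟨Df, hf⟩ := ihf
    refine ⟨Df, fun k n x h => ?_⟩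
    rcases k with _ | k
    · simp [evaln] at h
    simp [evaln, Option.bind_eq_some_iff] at h
    obtain ⟨-, y, -, hx⟩ := h
    exact hf _ _ _ hx
  | prec cf cg ihf ihg =>
    obtain ⟨Df, hf⟩ := ihf
    obtain ⟨Dg, hg⟩ := ihg
    refine ⟨Df + Dg, fun k n x h => ?_⟩
    rcases k with _ | k
    · simp [evaln] at h
    simp [evaln, Option.bind_eq_some_iff] at h
    obtain ⟨-, h⟩ := h
    revert h
    rcases n.unpair.2 with _ | m <;> intro h
    · exact (hf _ _ _ h).trans_le (mono (Nat.le_add_right Df Dg))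
    · simp [Option.bind_eq_some_iff] at h
      obtain ⟨y, -, hx⟩ := h
      exact (hg _ _ _ hx).trans_le (mono (Nat.le_add_left Dg Df))
  | rfind' cf _ =>
    refine ⟨1, fun k => ?_⟩
    induction k with
    | zero => simp [evaln]
    | succ k ih =>
      intro n x h
      simp [evaln, Option.bind_eq_some_iff] at h
      obtain ⟨hn, y, -, hx⟩ := h
      split_ifs at hx with hy
      · have := Nat.unpair_right_le n
        simp at hx
        subst hx
        rw [pow_one]
        omega
      · have := ih _ _ hx
        simp only [pow_one] at this ⊢
        omega

end Nat.Partrec.Code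

theorem Finset.injOn_card_filter_lt {ι α : Type*} [LinearOrder α] {s : Finset ι} {f : ι → α}
    (hf : Set.InjOn f s) : Set.InjOn (fun i => #{j ∈ s | f i < f j}) s := by
  have hlt : ∀ i ∈ s, ∀ i' ∈ s, f i < f i' →
      #{j ∈ s | f i' < f j} < #{j ∈ s | f i < f j} := by
    refine fun i _ i' hi' hii' => card_lt_card ((ssubset_iff_of_subset ?_).2 ⟨i', ?_, ?_⟩)
    · intro j hj
      simp only [mem_filter] at hj ⊢
      exact ⟨hj.1, hii'.trans hj.2⟩
    · simpa [hi'] using hii'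
    · simp
  intro i hi i' hi' heq
  rcases lt_trichotomy (f i) (f i') with h | h | h
  · exact absurd heq (hlt i hi i' hi' h).ne'
  · exact hf hi hi' h
  · exact absurd heq (hlt i' hi' i hi h).ne

section Halting

variable (U : Code)

def halted (κ m : ℕ) : Bool := (evaln κ U (Nat.pair m 0)).isSome

def runResult (κ m : ℕ) : ℕ := (evaln κ U (Nat.pair m 0)).getD 0

noncomputable def haltTime (m : ℕ) : ℕ := sInf {κ | halted U κ m}

def haltedBelow (N κ : ℕ) : Finset ℕ := {m ∈ range N | halted U κ m}

def cappedHaltTime (T m : ℕ) : ℕ := #{κ ∈ range (T + 1) | ¬halted U κ m}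

/-- On programs `m < N` that halt within `T` steps, keys are ordered lexicographically by
(halting time, `m`). -/
def haltKey (N T m : ℕ) : ℕ := cappedHaltTime U T m * N + m

def haltRank (N T m : ℕ) : ℕ := #{m' ∈ haltedBelow U N T | haltKey U N T m < haltKey U N T m'}

def rankedResult (N T r : ℕ) : ℕ :=
  ∑ m ∈ haltedBelow U N T, if haltRank U N T m = r then runResult U T m else 0

variable {U}

theorem halttime_eq_haltTime (p : List Bool) : halttime U p = haltTime U (strToNat p) := rfl

theorem halted_mono {κ κ' m : ℕ} (h : κ ≤ κ') (hκ : halted U κ m) : halted U κ' m := by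
  obtain ⟨v, hv⟩ := Option.isSome_iff_exists.1 hκ
  exact Option.isSome_iff_exists.2 ⟨v, evaln_mono h hv⟩

theorem halted_iff_haltTime_le {κ m : ℕ} (hm : ∃ κ, halted U κ m) :
    halted U κ m ↔ haltTime U m ≤ κ :=
  ⟨fun h => Nat.sInf_le h, fun h => halted_mono h (Nat.sInf_mem hm)⟩

theorem mem_evaln_haltTime {m v : ℕ} (h : v ∈ U.eval (Nat.pair m 0)) :
    v ∈ evaln (haltTime U m) U (Nat.pair m 0) := by
  obtain ⟨κ, hκ⟩ := evaln_complete.1 h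
  obtain ⟨v', hv'⟩ := Option.isSome_iff_exists.1
    (Nat.sInf_mem (s := {κ | halted U κ m}) ⟨κ, Option.isSome_iff_exists.2 ⟨v, hκ⟩⟩)
  rwa [← Part.mem_unique h (evaln_sound hv')] at hv'

theorem halted_haltTime {m v : ℕ} (h : v ∈ U.eval (Nat.pair m 0)) :
    halted U (haltTime U m) m :=
  Option.isSome_iff_exists.2 ⟨v, mem_evaln_haltTime h⟩

theorem runResult_eq {T m v : ℕ} (h : v ∈ U.eval (Nat.pair m 0)) (hT : haltTime U m ≤ T) :
    runResult U T m = v := by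
  rw [runResult, Option.mem_def.1 (evaln_mono hT (mem_evaln_haltTime h))]
  rfl

theorem haltTime_pos {m : ℕ} (hm : ∃ κ, halted U κ m) : 0 < haltTime U m :=
  Nat.pos_of_ne_zero fun h => by
    simpa [halted, evaln, h] using (halted_iff_haltTime_le hm).2 le_rfl

theorem mem_haltedBelow_iff {N κ m : ℕ} (hm : ∃ κ, halted U κ m) :
    m ∈ haltedBelow U N κ ↔ m < N ∧ haltTime U m ≤ κ := by
  simp [haltedBelow, halted_iff_haltTime_le hm]

theorem haltedBelow_mono (N : ℕ) : Monotone (haltedBelow U N) :=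
  fun _ _ h m hm => by
    simp only [haltedBelow, mem_filter] at hm ⊢
    exact ⟨hm.1, halted_mono h hm.2⟩

theorem cappedHaltTime_eq {T m : ℕ} (h : halted U T m) :
    cappedHaltTime U T m = haltTime U m := by
  have hle := (halted_iff_haltTime_le ⟨T, h⟩).1 h
  rw [cappedHaltTime, ← card_range (haltTime U m)]
  congr 1
  ext κ
  simp only [mem_filter, mem_range, halted_iff_haltTime_le ⟨T, h⟩]
  omega

theorem haltKey_injOn (N T : ℕ) : Set.InjOn (haltKey U N T) (range N) := by
  intro m hm m' hm' h
  have := congrArg (· % N) h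
  simpa only [haltKey, Nat.mul_add_mod_self_right, Nat.mod_eq_of_lt (mem_range.1 hm),
    Nat.mod_eq_of_lt (mem_range.1 hm')] using this

theorem haltKey_lt_haltKey {N T m m' : ℕ} (hm : m < N)
    (h : cappedHaltTime U T m < cappedHaltTime U T m') : haltKey U N T m < haltKey U N T m' := by
  have := Nat.mul_le_mul_right N (Nat.succ_le_of_lt h)
  rw [Nat.succ_mul] at this
  simp only [haltKey]
  omega

theorem haltRank_injOn (N T : ℕ) : Set.InjOn (haltRank U N T) (haltedBelow U N T) :=
  injOn_card_filter_lt ((haltKey_injOn N T).mono (filter_subset _ _))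

theorem rankedResult_haltRank {N T m : ℕ} (hm : m ∈ haltedBelow U N T) :
    rankedResult U N T (haltRank U N T m) = runResult U T m := by
  rw [rankedResult, sum_eq_single m
    (fun m' hm' hne => if_neg fun h => hne (haltRank_injOn N T hm' hm h)) (fun h => absurd hm h),
    if_pos rfl]

theorem haltRank_lt_card_sdiff {N T κ m : ℕ} (hmT : m ∈ haltedBelow U N T)
    (hmκ : m ∉ haltedBelow U N κ) :
    haltRank U N T m < #(haltedBelow U N T \ haltedBelow U N κ) := by
  simp only [haltedBelow, mem_filter, mem_range, not_and] at hmT hmκ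
  have hm := hmκ hmT.1
  refine card_lt_card ((ssubset_iff_of_subset fun m' hm' => ?_).2 ⟨m, ?_, by simp⟩)
  · simp only [haltedBelow, mem_filter, mem_range, mem_sdiff, not_and] at hm' ⊢
    refine ⟨hm'.1, fun _ hm'κ => hm'.2.not_gt (haltKey_lt_haltKey hm'.1.1 ?_)⟩
    rw [cappedHaltTime_eq hm'.1.2, cappedHaltTime_eq hmT.2]
    have := (halted_iff_haltTime_le ⟨κ, hm'κ⟩).1 hm'κ
    have := (halted_iff_haltTime_le (κ := κ) ⟨T, hmT.2⟩).not.1 hm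
    omega
  · simp [haltedBelow, hmT, hm]

theorem exists_two_pow_threshold {N T κ m k : ℕ} (hmT : m ∈ haltedBelow U N T)
    (hmκ : m ∉ haltedBelow U N κ) (hN : N < 2 ^ (k + 1)) :
    ∃ j a, 0 < a ∧ a * 2 ^ j ≤ #(haltedBelow U N T) ∧ #(haltedBelow U N κ) < a * 2 ^ j ∧
      Nat.log 2 (haltRank U N T m + 1) ≤ j ∧ Nat.log 2 (a + 1) + j ≤ k + 1 := by
  have hκT : κ ≤ T := le_of_not_ge fun h => hmκ (haltedBelow_mono N h hmT)
  have hrank := haltRank_lt_card_sdiff hmT hmκ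
  rw [card_sdiff_of_subset (haltedBelow_mono N hκT)] at hrank
  obtain ⟨a, ha, hlo, hhi⟩ :=
    exists_mul_two_pow_mem_Ioc (show #(haltedBelow U N κ) < #(haltedBelow U N T) by omega)
  have hTN : #(haltedBelow U N T) ≤ N := (card_filter_le _ _).trans (card_range N).le
  exact ⟨_, a, ha, hhi, hlo, Nat.log_mono_right hrank, log_add_one_add_le ha (by omega)⟩

end Halting

section Computability

variable (U : Code)

theorem primrec_evaln_pair_zero : Primrec₂ fun κ m => evaln κ U (Nat.pair m 0) :=
  primrec_evaln.comp ((Primrec.fst.pair (Primrec.const U)).pair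
    (Primrec₂.natPair.comp Primrec.snd (Primrec.const 0)))

theorem primrec_halted : Primrec₂ (halted U) :=
  Primrec.option_isSome.comp (primrec_evaln_pair_zero U)

theorem primrec_runResult : Primrec₂ (runResult U) :=
  Primrec.option_getD.comp (primrec_evaln_pair_zero U) (Primrec.const 0)

theorem primrec_card_haltedBelow : Primrec₂ fun N κ => #(haltedBelow U N κ) :=
  Primrec.card_filter_range (Primrec.eq.comp
    ((primrec_halted U).comp (Primrec.snd.comp Primrec.fst) Primrec.snd) (Primrec.const true))
    Primrec.fst

theorem primrec_cappedHaltTime : Primrec₂ (cappedHaltTime U) :=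
  Primrec.card_filter_range (Primrec.eq.comp
    ((primrec_halted U).comp Primrec.snd (Primrec.snd.comp Primrec.fst)) (Primrec.const true)).not
    (Primrec.succ.comp Primrec.fst)

theorem primrec_haltKey : Primrec fun q : (ℕ × ℕ) × ℕ => haltKey U q.1.1 q.1.2 q.2 :=
  Primrec.nat_add.comp (Primrec.nat_mul.comp
    ((primrec_cappedHaltTime U).comp (Primrec.snd.comp Primrec.fst) Primrec.snd)
    (Primrec.fst.comp Primrec.fst)) Primrec.snd

theorem primrec_haltRank : Primrec fun q : (ℕ × ℕ) × ℕ => haltRank U q.1.1 q.1.2 q.2 := by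
  have h := Primrec.card_filter_range (p := fun (q : (ℕ × ℕ) × ℕ) m' =>
    halted U q.1.2 m' ∧ haltKey U q.1.1 q.1.2 q.2 < haltKey U q.1.1 q.1.2 m')
    ((Primrec.eq.comp ((primrec_halted U).comp (Primrec.snd.comp (Primrec.fst.comp Primrec.fst))
      Primrec.snd) (Primrec.const true)).and
      (Primrec.nat_lt.comp ((primrec_haltKey U).comp Primrec.fst)
        ((primrec_haltKey U).comp ((Primrec.fst.comp Primrec.fst).pair Primrec.snd))))
    (Primrec.fst.comp Primrec.fst)
  exact h.of_eq fun q => by simp only [haltRank, haltedBelow, filter_filter]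

theorem primrec_rankedResult :
    Primrec fun q : (ℕ × ℕ) × ℕ => rankedResult U q.1.1 q.1.2 q.2 := by
  have h := Primrec.finset_sum_range (f := fun (q : (ℕ × ℕ) × ℕ) m =>
    if halted U q.1.2 m ∧ haltRank U q.1.1 q.1.2 m = q.2 then runResult U q.1.2 m else 0)
    (Primrec.ite ((Primrec.eq.comp ((primrec_halted U).comp
      (Primrec.snd.comp (Primrec.fst.comp Primrec.fst)) Primrec.snd) (Primrec.const true)).and
      (Primrec.eq.comp
        ((primrec_haltRank U).comp ((Primrec.fst.comp Primrec.fst).pair Primrec.snd))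
        (Primrec.snd.comp Primrec.fst)))
      ((primrec_runResult U).comp (Primrec.snd.comp (Primrec.fst.comp Primrec.fst)) Primrec.snd)
      (Primrec.const 0)).to₂
    (Primrec.fst.comp Primrec.fst)
  exact h.of_eq fun q => by simp only [rankedResult, haltedBelow, sum_filter, ite_and]

theorem exists_lt_pow_halttime :
    ∃ D, ∀ p v, v ∈ evalS U p [] → v < (halttime U p + 1) ^ D := by
  obtain ⟨D, hD⟩ := exists_evaln_lt_pow U
  exact ⟨D, fun p v hv => hD _ _ _ (mem_evaln_haltTime hv)⟩

end Computability

section Machines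

def rfindMap (p : ℕ → ℕ → Bool) (f : ℕ → ℕ → ℕ) : ℕ →. ℕ :=
  fun a => (Nat.rfind fun κ => Part.some (p a κ)).map (f a)

variable {p : ℕ → ℕ → Bool} {f : ℕ → ℕ → ℕ}

theorem rfindMap_eq {a : ℕ} (h : ∃ κ, p a κ) :
    rfindMap p f a = Part.some (f a (sInf {κ | p a κ})) := by
  have hmem : sInf {κ | p a κ} ∈ Nat.rfind fun κ => Part.some (p a κ) :=
    Nat.mem_rfind.2 ⟨by simpa using (Nat.sInf_mem h : sInf {κ | p a κ} ∈ {κ | p a κ}),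
      fun hlt => by simpa using Nat.notMem_of_lt_sInf hlt⟩
  rw [rfindMap, Part.eq_some_iff.2 hmem, Part.map_some]

theorem partrec_rfindMap (hp : Primrec₂ p) (hf : Primrec₂ f) : Nat.Partrec (rfindMap p f) :=
  Partrec.nat_iff.1 ((Partrec.rfind hp.to_comp.partrec₂).map hf.to_comp)

variable (U : Code)

def rankMachine : ℕ →. ℕ :=
  rfindMap (fun n T => halted U T n.unpair.1)
    fun n T => rankedResult U (2 ^ ((decodePair n.unpair.2).1 + 1) - 1) T (decodePair n.unpair.2).2

def countReached (z τ : ℕ) : Bool :=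
  (decodePair (decodePair z).2).2 * 2 ^ (decodePair (decodePair z).2).1 ≤
    #(haltedBelow U (2 ^ ((decodePair z).1 + 1) - 1) τ)

/-- Waits until `a * 2 ^ j` programs of length `≤ k` have halted, where `(k, (j, a))` is read
off the program, and then outputs a number that `U` cannot produce in fewer steps than it waited
(for `D` as in `exists_lt_pow_halttime`). -/
def countMachine (D : ℕ) : ℕ →. ℕ :=
  rfindMap (fun n τ => countReached U n.unpair.1 τ) fun _ τ => τ ^ D

theorem countReached_encodePair {k j a τ : ℕ} :
    countReached U (encodePair k (encodePair j a)) τ ↔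
      a * 2 ^ j ≤ #(haltedBelow U (2 ^ (k + 1) - 1) τ) := by
  simp [countReached, decodePair_encodePair]

theorem rankMachine_eq {m : ℕ} (hm : ∃ κ, halted U κ m) (z : ℕ) :
    rankMachine U (Nat.pair m z) =
      Part.some
        (rankedResult U (2 ^ ((decodePair z).1 + 1) - 1) (haltTime U m) (decodePair z).2) := by
  rw [rankMachine, rfindMap_eq (by simpa using hm)]
  simp [haltTime]

theorem countMachine_eq (D : ℕ) {k j a : ℕ}
    (h : ∃ τ, a * 2 ^ j ≤ #(haltedBelow U (2 ^ (k + 1) - 1) τ)) :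
    countMachine U D (Nat.pair (encodePair k (encodePair j a)) 0) =
      Part.some (sInf {τ | a * 2 ^ j ≤ #(haltedBelow U (2 ^ (k + 1) - 1) τ)} ^ D) := by
  rw [countMachine, rfindMap_eq (by simpa [countReached_encodePair] using h)]
  simp [countReached_encodePair]

theorem partrec_rankMachine : Nat.Partrec (rankMachine U) := by
  have hd : Primrec fun n : ℕ => decodePair n.unpair.2 :=
    primrec_decodePair.comp (Primrec.snd.comp Primrec.unpair)
  have hN : Primrec fun n : ℕ => 2 ^ ((decodePair n.unpair.2).1 + 1) - 1 :=
    Primrec.nat_sub.comp (Primrec.nat_pow.comp (Primrec.const 2)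
      (Primrec.succ.comp (Primrec.fst.comp hd))) (Primrec.const 1)
  have hf := (primrec_rankedResult U).comp (((hN.comp Primrec.fst).pair Primrec.snd).pair
    (Primrec.snd.comp (hd.comp Primrec.fst)))
  exact partrec_rfindMap ((primrec_halted U).comp Primrec.snd
    (Primrec.fst.comp (Primrec.unpair.comp Primrec.fst))) hf

theorem partrec_countMachine (D : ℕ) : Nat.Partrec (countMachine U D) := by
  have hz := Primrec.fst.comp (Primrec.unpair.comp (Primrec.fst (α := ℕ) (β := ℕ)))
  have hky := primrec_decodePair.comp hz
  have hja := primrec_decodePair.comp (Primrec.snd.comp hky)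
  refine partrec_rfindMap ?_ (Primrec.nat_pow.comp Primrec.snd (Primrec.const D)).to₂
  exact (Primrec.nat_le.comp (Primrec.nat_mul.comp (Primrec.snd.comp hja)
    (Primrec.nat_pow.comp (Primrec.const 2) (Primrec.fst.comp hja)))
    ((primrec_card_haltedBelow U).comp (Primrec.nat_sub.comp (Primrec.nat_pow.comp
      (Primrec.const 2) (Primrec.succ.comp (Primrec.fst.comp hky))) (Primrec.const 1))
      Primrec.snd)).decide.to₂

end Machines

section Witnesses

variable {U : Code}

theorem Cpx_le_length {p x : List Bool} (h : outputs U p [] x) : Cpx U x ≤ p.length :=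
  Nat.sInf_le ⟨p, rfl, h⟩

theorem soph_le_length {s : ℤ} {p d x : List Bool} (htot : ∀ d, (evalS U p d).Dom)
    (hout : outputs U p d x) (hlen : (p.length + d.length : ℤ) ≤ Cpx U x + s) :
    soph U s x ≤ p.length :=
  Nat.sInf_le ⟨p, rfl, htot, d, hout, hlen⟩

theorem bbInv_le_length {t : ℕ} {p : List Bool} (hp : haltsOn U p) (ht : t ≤ halttime U p) :
    bbInv U t ≤ p.length :=
  Nat.sInf_le ⟨p, rfl, hp, ht⟩

theorem exists_ld_witness {c : ℕ} {x : List Bool} (hx : ∃ p, outputs U p [] x) :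
    ∃ p, p.length ≤ Cpx U x + c ∧ outputs U p [] x ∧ halttime U p = ld U c x := by
  obtain ⟨p, hp⟩ := hx
  obtain ⟨p, hpC, hpx⟩ := Nat.sInf_mem
    (s := {n | ∃ p : List Bool, p.length = n ∧ outputs U p [] x}) ⟨_, p, rfl, hp⟩
  exact Nat.sInf_mem (s := {t | ∃ p : List Bool, p.length ≤ Cpx U x + c ∧ outputs U p [] x ∧
    halttime U p = t}) ⟨_, p, hpC ▸ Nat.le_add_right _ _, hpx, rfl⟩

theorem exists_bbInv_witness {t : ℕ} {p : List Bool} (hp : haltsOn U p)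
    (ht : t ≤ halttime U p) :
    ∃ q, q.length = bbInv U t ∧ haltsOn U q ∧ t ≤ halttime U q :=
  Nat.sInf_mem (s := {k | ∃ q : List Bool, q.length = k ∧ haltsOn U q ∧ t ≤ halttime U q})
    ⟨_, p, rfl, hp, ht⟩

end Witnesses

section Universal

variable {U : Code}

theorem Universal.exists_prefix (hU : Universal U) {f : ℕ →. ℕ} (hf : Nat.Partrec f) :
    ∃ w : List Bool, ∀ p d : List Bool, (f (Nat.pair (strToNat p) (strToNat d))).Dom →
      evalS U (w ++ p) d = f (Nat.pair (strToNat p) (strToNat d)) := by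
  obtain ⟨c, rfl⟩ := exists_code.1 hf
  exact hU c

theorem Universal.exists_print (hU : Universal U) :
    ∃ w : List Bool, ∀ x, outputs U (w ++ x) [] x := by
  obtain ⟨w, hw⟩ := hU.exists_prefix Nat.Partrec.left
  exact ⟨w, fun x => by simp [outputs, hw x [] trivial]⟩

theorem Universal.exists_soph_le_const (hU : Universal U) :
    ∃ C : ℕ, ∀ (s : ℤ) x, (C + x.length : ℤ) ≤ Cpx U x + s → soph U s x ≤ C := by
  obtain ⟨w, hw⟩ := hU.exists_prefix Nat.Partrec.right
  have hcopy : ∀ d, evalS U w d = Part.some (strToNat d) := by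
    simpa using hw []
  exact ⟨w.length, fun s x hx =>
    soph_le_length (fun d => by simp [hcopy]) (by simp [outputs, hcopy]) hx⟩

theorem Universal.exists_soph_le_of_rankedResult (hU : Universal U) :
    ∃ C : ℕ, ∀ (q x : List Bool) (k r : ℕ) (s : ℤ), haltsOn U q →
      rankedResult U (2 ^ (k + 1) - 1) (halttime U q) r = strToNat x →
      (C + q.length + Nat.log 2 (encodePair k r + 1) : ℤ) ≤ Cpx U x + s →
      soph U s x ≤ C + q.length := by
  obtain ⟨w, hw⟩ := hU.exists_prefix (partrec_rankMachine U)
  refine ⟨w.length, fun q x k r s hq hx hs => ?_⟩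
  obtain ⟨v, hv⟩ := Part.dom_iff_mem.1 hq
  have hrun := rankMachine_eq U ⟨_, halted_haltTime hv⟩
  have hwq : ∀ d, evalS U (w ++ q) d = _ := fun d => (hw q d (by simp [hrun])).trans (hrun _)
  obtain ⟨d, hd⟩ := strToNat_surjective (encodePair k r)
  have hout : outputs U (w ++ q) d x := by
    simp [outputs, hwq, hd, decodePair_encodePair, ← halttime_eq_haltTime, hx]
  have hlen : ((w ++ q).length + d.length : ℤ) ≤ Cpx U x + s := by
    rw [length_eq_log d, hd, List.length_append]
    push_cast at hs ⊢
    linarith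
  exact (soph_le_length (fun d => by rw [hwq]; trivial) hout hlen).trans_eq (List.length_append ..)

theorem Universal.exists_bbInv_le_of_count (hU : Universal U) :
    ∃ C : ℕ, ∀ k j a t τ : ℕ, a * 2 ^ j ≤ #(haltedBelow U (2 ^ (k + 1) - 1) τ) →
      (∀ κ < t, #(haltedBelow U (2 ^ (k + 1) - 1) κ) < a * 2 ^ j) →
      bbInv U t ≤ C + Nat.log 2 (encodePair k (encodePair j a) + 1) := by
  obtain ⟨D, hD⟩ := exists_lt_pow_halttime U
  obtain ⟨w, hw⟩ := hU.exists_prefix (partrec_countMachine U D)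
  refine ⟨w.length, fun k j a t τ hτ ht => ?_⟩
  obtain ⟨ρ, hρ⟩ := strToNat_surjective (encodePair k (encodePair j a))
  have hrun := countMachine_eq U D ⟨τ, hτ⟩
  set τ₀ := sInf {τ | a * 2 ^ j ≤ #(haltedBelow U (2 ^ (k + 1) - 1) τ)}
  have hwρ : evalS U (w ++ ρ) [] = Part.some (τ₀ ^ D) := by
    rw [hw ρ [] (by simp [hρ, hrun]), hρ]
    exact hrun
  have hmem : a * 2 ^ j ≤ #(haltedBelow U (2 ^ (k + 1) - 1) τ₀) :=
    Nat.sInf_mem (s := {τ | a * 2 ^ j ≤ #(haltedBelow U (2 ^ (k + 1) - 1) τ)}) ⟨τ, hτ⟩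
  have htτ₀ : t ≤ τ₀ := not_lt.1 fun hlt => (ht _ hlt).not_ge hmem
  have hτ₀ : τ₀ ≤ halttime U (w ++ ρ) := Nat.lt_succ_iff.1 <|
    lt_of_pow_lt_pow_left₀ D (Nat.zero_le _) (hD _ _ (hwρ ▸ Part.mem_some _))
  calc bbInv U t
    _ ≤ (w ++ ρ).length := bbInv_le_length (by simp [haltsOn, hwρ]) (htτ₀.trans hτ₀)
    _ = _ := by rw [List.length_append, length_eq_log ρ, hρ]

theorem Universal.exists_soph_le_ldbb_add (hU : Universal U) :
    ∃ C : ℕ, ∀ (c : ℕ) (x : List Bool) (s : ℤ),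
      (c + C + 6 * Nat.log 2 (Cpx U x + c) : ℤ) ≤ s → soph U s x ≤ ldbb U c x + C := by
  obtain ⟨CG, hG⟩ := hU.exists_soph_le_of_rankedResult
  obtain ⟨CR, hR⟩ := hU.exists_bbInv_le_of_count
  obtain ⟨w, hw⟩ := hU.exists_print
  refine ⟨CG + CR + 10, fun c x s hs => ?_⟩
  set k := Cpx U x + c
  obtain ⟨p, hpk, hpx, hpt⟩ := exists_ld_witness (c := c) ⟨_, hw x⟩
  obtain ⟨q, hql, hq, hqt⟩ := exists_bbInv_witness (Part.dom_iff_mem.2 ⟨_, hpx⟩) hpt.ge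
  have hldbb : ldbb U c x = q.length := hql.symm
  rw [← hpt, halttime_eq_haltTime] at hqt hql
  have hp : ∃ κ, halted U κ (strToNat p) := ⟨_, halted_haltTime hpx⟩
  have hpT : strToNat p ∈ haltedBelow U (2 ^ (k + 1) - 1) (halttime U q) :=
    (mem_haltedBelow_iff hp).2 ⟨strToNat_lt_of_length_le hpk, hqt⟩
  have hpt' : strToNat p ∉ haltedBelow U (2 ^ (k + 1) - 1) (haltTime U (strToNat p) - 1) :=
    fun h => by
      have := ((mem_haltedBelow_iff hp).1 h).2
      have := haltTime_pos hp
      omega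
  obtain ⟨j, a, ha, hhi, hlo, hr, hja⟩ :=
    exists_two_pow_threshold hpT hpt' (Nat.sub_lt (Nat.two_pow_pos _) one_pos)
  have hbb := hR k j a (haltTime U (strToNat p)) _ hhi fun κ hκ =>
    (card_le_card (haltedBelow_mono _ (Nat.le_sub_one_of_lt hκ))).trans_lt hlo
  have hsel := (rankedResult_haltRank hpT).trans (runResult_eq hpx hqt)
  have := Nat.log_pos one_lt_two (show 2 ≤ a + 1 by omega)
  have hjk : Nat.log 2 j ≤ Nat.log 2 k := Nat.log_mono_right (by omega)
  have := log_encodePair_le k (haltRank U (2 ^ (k + 1) - 1) (halttime U q) (strToNat p))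
  have := log_encodePair_le k (encodePair j a)
  have := log_encodePair_le j a
  -- the rank costs `j` bits and `q` at most `k + 1 - j + O(log k)`: the `j` cancels
  refine (hG q x k _ s hq hsel ?_).trans (by omega)
  push_cast at hs ⊢
  omega

theorem Universal.exists_log_Cpx_add_le (hU : Universal U) :
    ∃ B, ∀ c x, c < x.length → Nat.log 2 (Cpx U x + c) ≤ Nat.log 2 x.length + B := by
  obtain ⟨w, hw⟩ := hU.exists_print
  refine ⟨w.length + 2, fun c x hc => log_le_log_add_of_le_mul_two_pow ?_⟩
  have hC : Cpx U x ≤ w.length + x.length :=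
    (Cpx_le_length (hw x)).trans_eq (List.length_append ..)
  have hwB : w.length + 2 ≤ 2 ^ (w.length + 2) := Nat.lt_two_pow_self.le
  nlinarith

end Universal

theorem ldbb_bounds_soph :
    ∀ U : Nat.Partrec.Code, Universal U →
    ∃ e : ℕ, ∀ c : ℕ, ∀ x : List Bool, e ≤ x.length →
      soph U ((c : ℤ) + e * Nat.log 2 x.length) x ≤ ldbb U c x + e * Nat.log 2 x.length := by
  intro U hU
  obtain ⟨C₁, h₁⟩ := hU.exists_soph_le_ldbb_add
  obtain ⟨C₂, h₂⟩ := hU.exists_soph_le_const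
  obtain ⟨B, hB⟩ := hU.exists_log_Cpx_add_le
  refine ⟨C₁ + C₂ + 6 * B + 8, fun c x hx => ?_⟩
  have hL : 1 ≤ Nat.log 2 x.length := Nat.log_pos one_lt_two (by omega)
  by_cases hc : x.length ≤ c
  · refine (h₂ _ x ?_).trans (by nlinarith)
    push_cast
    nlinarith
  · have hlog := hB c x (by omega)
    refine (h₁ c x _ ?_).trans (by nlinarith)
    push_cast
    nlinarith
end

section
/- For every integer c ≥ 0 and every binary string x, the Busy Beaver logical depth of x at significance c is at most its Kolmogorov complexity: ld^bb_c(x) ≤ C(x). -/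
theorem ldbb_le_C :
    ∀ U : Nat.Partrec.Code, Universal U →
    ∀ c : ℕ, ∀ x : List Bool, ldbb U c x ≤ Cpx U x := by
  intro U hU c x
  obtain ⟨w, hw⟩ := hU (Nat.Partrec.Code.const (strToNat x))
  have hVdom : (evalS (Nat.Partrec.Code.const (strToNat x)) [] []).Dom := by
    simp [evalS, Nat.Partrec.Code.eval_const]
  have hx : outputs U w [] x := by
    have h := hw [] [] hVdom
    simp only [List.append_nil] at h
    rw [outputs, h]; simp [evalS, Nat.Partrec.Code.eval_const]
  have hne : {n | ∃ p : List Bool, p.length = n ∧ outputs U p [] x}.Nonempty :=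
    ⟨w.length, w, rfl, hx⟩
  obtain ⟨p, hp, hout⟩ := Nat.sInf_mem hne
  have hdom : haltsOn U p := Part.dom_iff_mem.mpr ⟨_, hout⟩
  have hld : ld U c x ≤ halttime U p :=
    Nat.sInf_le ⟨p, by rw [hp]; exact Nat.le_add_right _ _, hout, rfl⟩
  exact Nat.sInf_le ⟨p, hp, hdom, hld⟩
end

section
/- There is a constant e such that for every binary string x, every program p, and every integer c ≥ 0: if U(p) = x and |p| ≤ C(x) + c, then C(p) ≥ |p| − c − e. (Every program for x that is within c bits of shortest is itself (c + O(1))-incompressible.) -/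
open Nat.Partrec (Code)
open Nat.Partrec.Code

theorem near_shortest_programs_incompressible :
    ∀ U : Nat.Partrec.Code, Universal U →
    ∃ e : ℕ, ∀ x p : List Bool, ∀ c : ℕ,
      outputs U p [] x → p.length ≤ Cpx U x + c →
      (p.length : ℤ) - c - e ≤ (Cpx U p : ℤ) := by
  intro U hU
  -- U.eval is partrec
  have hUev : Nat.Partrec U.eval := exists_code.2 ⟨U, rfl⟩
  -- g m = U.eval (pair m 0)
  have hg : Partrec (fun m : ℕ => U.eval (Nat.pair m 0)) := by
    exact (Partrec.nat_iff.2 hUev).comp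
      (Primrec.to_comp (Primrec₂.natPair.comp Primrec.id (Primrec.const 0)))
  -- f m = (g m.unpair.1).bind g
  have hf : Partrec (fun m : ℕ =>
      (U.eval (Nat.pair m.unpair.1 0)).bind (fun n => U.eval (Nat.pair n 0))) := by
    have h1 : Partrec (fun m : ℕ => U.eval (Nat.pair m.unpair.1 0)) :=
      hg.comp (Primrec.to_comp (Primrec.fst.comp Primrec.unpair))
    exact h1.bind (hg.comp (Computable.snd)).to₂
  obtain ⟨V, hV⟩ := exists_code.1 (Partrec.nat_iff.1 hf)
  obtain ⟨w, hw⟩ := hU V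
  refine ⟨w.length, fun x p c hpx hplen => ?_⟩
  -- Cpx U p is attained
  have hne : {n | ∃ q : List Bool, q.length = n ∧ outputs U q [] p}.Nonempty := by
    obtain ⟨w', hw'⟩ := hU (Code.const (strToNat p))
    have hdom : (evalS (Code.const (strToNat p)) [] []).Dom := by
      simp [evalS, eval_const]
    refine ⟨(w' ++ []).length, w' ++ [], rfl, ?_⟩
    unfold outputs
    rw [hw' [] [] hdom]
    simp [evalS, eval_const]
  obtain ⟨q, hqlen, hqp⟩ : ∃ q : List Bool, q.length = Cpx U p ∧ outputs U q [] p := Nat.sInf_mem hne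
  -- V on q outputs x
  have hx : strToNat x ∈ evalS V q [] := by
    unfold evalS
    rw [hV]
    simp only [Nat.unpair_pair]
    refine Part.mem_bind_iff.2 ⟨strToNat p, ?_, ?_⟩
    · have := hqp; unfold outputs evalS at this; simpa [strToNat] using this
    · have := hpx; unfold outputs evalS at this; simpa [strToNat] using this
  have hdom : (evalS V q []).Dom := Part.dom_iff_mem.2 ⟨_, hx⟩
  have hwx : outputs U (w ++ q) [] x := by
    unfold outputs; rw [hw q [] hdom]; exact hx
  have hCx : Cpx U x ≤ w.length + q.length := by
    apply Nat.sInf_le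
    exact ⟨w ++ q, by simp, hwx⟩
  have : p.length ≤ w.length + Cpx U p + c := by
    have := hplen
    omega
  omega
end
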